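/- Let E be a complex Banach space and P : E → E a continuous linear map with P ∘ P = id. Then for every real δ with 0 < δ < 2, exp( (1/2)·ln(δ(2−δ))·id + (1/2)·ln(δ/(2−δ))·P ) = id + (δ−1)·P. (This is the identity expressing the transfer-matrix factor 1 + (δ−1)P as the exponential of a local Hamiltonian term.) -/

import Mathlib

/-!
For an involution `P`, `Q = (1 + P) / 2` is idempotent, and `a + b P = (a + b) Q + (a - b) (1 - Q)`
is a sum of commuting multiples of complementary idempotents. Since `exp (t Q) = 1 - Q + eᵗ Q`,
its exponential is `e^(a+b) Q + e^(a-b) (1 - Q)`. With the given logarithms, `e^(a+b) = δ` and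
`e^(a-b) = 2 - δ`, which gives `δ Q + (2 - δ)(1 - Q) = 1 + (δ - 1) P`.
-/

open NormedSpace Nat

theorem IsIdempotentElem.exp_smul {𝕂 A : Type*} [RCLike 𝕂] [NormedRing A] [NormedAlgebra 𝕂 A]
    {Q : A} (hQ : IsIdempotentElem Q) (t : 𝕂) : exp (t • Q) = 1 - Q + exp t • Q := by
  have hterm : ∀ n : ℕ, (n !⁻¹ : 𝕂) • (t • Q) ^ n =
      (if n = 0 then 1 - Q else 0) + ((n !⁻¹ : 𝕂) • t ^ n) • Q := by
    rintro (_ | n)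
    · simp
    · rw [smul_pow, hQ.pow_succ_eq, smul_smul, if_neg n.succ_ne_zero, zero_add, smul_eq_mul]
  have hsum : HasSum (fun n : ℕ => (n !⁻¹ : 𝕂) • (t • Q) ^ n) (1 - Q + exp t • Q) := by
    simp only [hterm]
    exact (hasSum_ite_eq 0 (1 - Q)).add ((exp_series_hasSum_exp' t).smul_const Q)
  rw [exp_eq_tsum 𝕂]
  exact hsum.tsum_eq

theorem isIdempotentElem_inv_two_smul_one_add {𝕂 A : Type*} [Field 𝕂] [NeZero (2 : 𝕂)] [Ring A]
    [Algebra 𝕂 A] {P : A} (hP : P * P = 1) : IsIdempotentElem ((2⁻¹ : 𝕂) • (1 + P)) := by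
  have : (1 + P) * (1 + P) = (2 : 𝕂) • (1 + P) := by
    rw [mul_add, add_mul, add_mul, hP, ofNat_smul_eq_nsmul]; noncomm_ring
  rw [IsIdempotentElem, smul_mul_smul_comm, this, smul_smul, inv_mul_cancel_right₀ two_ne_zero]

theorem IsIdempotentElem.exp_smul_add_smul_one_sub {𝕂 A : Type*} [RCLike 𝕂] [NormedRing A]
    [NormedAlgebra 𝕂 A] [CompleteSpace A] {Q : A} (hQ : IsIdempotentElem Q) (s t : 𝕂) :
    exp (s • Q + t • (1 - Q)) = exp s • Q + exp t • (1 - Q) := by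
  let +nondep : NormedAlgebra ℚ A := .restrictScalars ℚ 𝕂 A
  have hcomm : Commute (s • Q) (t • (1 - Q)) :=
    ((Commute.one_right Q).sub_right (Commute.refl Q)).smul_left s |>.smul_right t
  rw [exp_add_of_commute hcomm, hQ.exp_smul, hQ.one_sub.exp_smul, sub_sub_cancel]
  simp only [add_mul, mul_add, hQ.eq, hQ.one_sub.eq, hQ.mul_one_sub_self,
    hQ.one_sub_mul_self, smul_mul_assoc, mul_smul_comm, smul_zero, add_zero, zero_add]

theorem exp_smul_one_add_smul_of_mul_self_eq_one {𝕂 A : Type*} [RCLike 𝕂] [NormedRing A]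
    [NormedAlgebra 𝕂 A] [CompleteSpace A] {P : A} (hP : P * P = 1) (a b : 𝕂) :
    exp (a • 1 + b • P) =
      exp (a + b) • (2⁻¹ : 𝕂) • (1 + P) + exp (a - b) • (2⁻¹ : 𝕂) • (1 - P) := by
  have hQ := isIdempotentElem_inv_two_smul_one_add (𝕂 := 𝕂) hP
  have hR : 1 - (2⁻¹ : 𝕂) • (1 + P) = (2⁻¹ : 𝕂) • (1 - P) := by module
  have hX : a • 1 + b • P =
      (a + b) • (2⁻¹ : 𝕂) • (1 + P) + (a - b) • (1 - (2⁻¹ : 𝕂) • (1 + P)) := by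
    module
  rw [hX, hQ.exp_smul_add_smul_one_sub, hR]

theorem exp_of_involution_eq_one_add_smul
    (E : Type*) [NormedAddCommGroup E] [NormedSpace ℂ E] [CompleteSpace E]
    (P : E →L[ℂ] E) (hP : P ∘L P = ContinuousLinearMap.id ℂ E)
    (δ : ℝ) (h0 : 0 < δ) (h2 : δ < 2) :
    NormedSpace.exp
        ((((1 : ℝ) / 2 * Real.log (δ * (2 - δ)) : ℝ) : ℂ) • ContinuousLinearMap.id ℂ E +
          (((1 : ℝ) / 2 * Real.log (δ / (2 - δ)) : ℝ) : ℂ) • P) =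
      ContinuousLinearMap.id ℂ E + ((δ : ℂ) - 1) • P := by
  have h2δ : 0 < 2 - δ := by linarith
  have hlog_mul := Real.log_mul h0.ne' h2δ.ne'
  have hlog_div := Real.log_div h0.ne' h2δ.ne'
  have hsum : 1 / 2 * Real.log (δ * (2 - δ)) + 1 / 2 * Real.log (δ / (2 - δ)) = Real.log δ := by
    rw [hlog_mul, hlog_div]; ring
  have hdiff : 1 / 2 * Real.log (δ * (2 - δ)) - 1 / 2 * Real.log (δ / (2 - δ)) =
      Real.log (2 - δ) := by
    rw [hlog_mul, hlog_div]; ring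
  rw [show ContinuousLinearMap.id ℂ E = 1 from rfl, exp_smul_one_add_smul_of_mul_self_eq_one hP,
    ← Complex.ofReal_add, ← Complex.ofReal_sub, hsum, hdiff, ← Complex.exp_eq_exp_ℂ,
    ← Complex.ofReal_exp, ← Complex.ofReal_exp, Real.exp_log h0, Real.exp_log h2δ]
  push_cast
  module
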